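/- (Energy preservation of LinOSS-IMEX.) For all real A ≥ 0 and Δt with Δt²·A ≤ 4, the complex numbers λ^IMEX±(A,Δt) satisfy |λ^IMEX±(A,Δt)| = 1, i.e., the LinOSS-IMEX eigenvalues lie on the complex unit circle. -/

import Mathlib

/-- The LinOSS-IMEX per-component eigenvalues (`s = 1` for `+`, `s = -1` for `−`). -/
noncomputable def lamIMEX (A Δt : ℝ) (s : ℝ) : ℂ :=
  (((2 - Δt ^ 2 * A) / 2 : ℝ) : ℂ) +
    (s : ℂ) * (Complex.I / 2) * ((Real.sqrt (Δt ^ 2 * A * (4 - Δt ^ 2 * A)) : ℝ) : ℂ)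

open Complex

theorem lamIMEX_eq_ofReal_add_ofReal_mul_I (A Δt s : ℝ) :
    lamIMEX A Δt s = ((2 - Δt ^ 2 * A) / 2 : ℝ) +
      (s * (√(Δt ^ 2 * A * (4 - Δt ^ 2 * A)) / 2) : ℝ) * I := by
  rw [lamIMEX]
  push_cast
  ring

theorem sq_two_sub_div_two_add_sq_sqrt_div_two {x : ℝ} (hx0 : 0 ≤ x) (hx4 : x ≤ 4) :
    ((2 - x) / 2) ^ 2 + (√(x * (4 - x)) / 2) ^ 2 = 1 := by
  rw [div_pow, div_pow, Real.sq_sqrt (mul_nonneg hx0 (by linarith))]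
  ring

theorem linossIMEX_energy_preservation (A Δt : ℝ) (hA : 0 ≤ A) (hbound : Δt ^ 2 * A ≤ 4)
    (s : ℝ) (hs : s = 1 ∨ s = -1) :
    ‖lamIMEX A Δt s‖ = 1 := by
  rw [lamIMEX_eq_ofReal_add_ofReal_mul_I, norm_add_mul_I, mul_pow, sq_eq_one_iff.mpr hs,
    one_mul, sq_two_sub_div_two_add_sq_sqrt_div_two (mul_nonneg (sq_nonneg Δt) hA) hbound,
    Real.sqrt_one]
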